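/- arXiv:2603.05475 — 5 statements merged into one kernel-verified Lean document; each statement's English description precedes it below -/
import Mathlib

section
/- Let T ≥ 1/π and define the periodic Gaussian Φ_T(x) = (1/Z)·Σ_{j∈ℤ} exp(-(x+2jπ)²T²/2), where Z = Σ_{j∈ℤ} exp(-(2jπ)²T²/2). Then Φ_T is convex on the interval [1/T, 2π - 1/T]. -/
/-! The bump `exp (-(x + 2jπ)² T² / 2)` is convex outside its inflection points
`-2jπ ± 1/T`. Every point of `[1/T, 2π - 1/T]` lies at distance at least `1/T` from all the
centres `-2jπ`, so each term of the periodization is convex there, and a pointwise convergent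
series of convex functions is convex. -/

open Real

noncomputable def periodicGaussian (T : ℝ) (x : ℝ) : ℝ :=
  (∑' j : ℤ, Real.exp (-(x + 2 * j * π) ^ 2 * T ^ 2 / 2)) /
  (∑' j : ℤ, Real.exp (-(2 * j * π) ^ 2 * T ^ 2 / 2))

open Set

theorem convexOn_tsum {ι E : Type*} [AddCommGroup E] [Module ℝ E] {s : Set E}
    {f : ι → E → ℝ} (hs : Convex ℝ s) (hf : ∀ i, ConvexOn ℝ s (f i))
    (hsum : ∀ x ∈ s, Summable fun i => f i x) :
    ConvexOn ℝ s fun x => ∑' i, f i x := by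
  refine ⟨hs, fun x hx y hy a b ha hb hab => ?_⟩
  have hxy : Summable fun i => a • f i x + b • f i y :=
    ((hsum x hx).const_smul a).add ((hsum y hy).const_smul b)
  calc ∑' i, f i (a • x + b • y) ≤ ∑' i, (a • f i x + b • f i y) :=
        (hsum _ (hs hx hy ha hb hab)).tsum_le_tsum (fun i => (hf i).2 hx hy ha hb hab) hxy
    _ = a • ∑' i, f i x + b • ∑' i, f i y := by
        rw [((hsum x hx).const_smul a).tsum_add ((hsum y hy).const_smul b),
          (hsum x hx).tsum_const_smul, (hsum y hy).tsum_const_smul]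

theorem convexOn_exp_neg_sq_mul_sq {D : Set ℝ} (hD : Convex ℝ D) {c T : ℝ}
    (hD₁ : ∀ x ∈ D, 1 ≤ ((x + c) * T) ^ 2) :
    ConvexOn ℝ D fun x => exp (-(x + c) ^ 2 * T ^ 2 / 2) := by
  have hf' (x : ℝ) : HasDerivAt (fun x => exp (-(x + c) ^ 2 * T ^ 2 / 2))
      (-(x + c) * T ^ 2 * exp (-(x + c) ^ 2 * T ^ 2 / 2)) x := by
    have h : HasDerivAt (fun x => -(x + c) ^ 2 * T ^ 2 / 2) (-(x + c) * T ^ 2) x :=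
      ((((hasDerivAt_id x).add_const c).pow 2).neg.mul_const (T ^ 2)).div_const 2
        |>.congr_deriv (by simp only [id]; ring)
    exact h.exp.congr_deriv (by ring)
  have hf'' (x : ℝ) : HasDerivAt (fun x => -(x + c) * T ^ 2 * exp (-(x + c) ^ 2 * T ^ 2 / 2))
      ((((x + c) * T) ^ 2 - 1) * T ^ 2 * exp (-(x + c) ^ 2 * T ^ 2 / 2)) x :=
    (((hasDerivAt_id x).add_const c).neg.mul_const (T ^ 2)).mul (hf' x)
      |>.congr_deriv (by simp only [id, Pi.neg_apply]; ring)
  refine convexOn_of_hasDerivWithinAt2_nonneg hD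
    (fun x _ => (hf' x).continuousAt.continuousWithinAt) (fun x _ => (hf' x).hasDerivWithinAt)
    (fun x _ => (hf'' x).hasDerivWithinAt) fun x hx => ?_
  have := sub_nonneg.2 (hD₁ x (interior_subset hx))
  positivity

theorem summable_exp_neg_sq_add_int_mul (x : ℝ) {p T : ℝ} (hp : p ≠ 0) (hT : T ≠ 0) :
    Summable fun j : ℤ => exp (-(x + j * p) ^ 2 * T ^ 2 / 2) := by
  set a : ℝ := x * p * T ^ 2 / (2 * π)
  set b : ℝ := p ^ 2 * T ^ 2 / (2 * π)
  have hb : 0 < b := by positivity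
  -- up to the factor `exp (-x² T² / 2)`, the terms are those of a Jacobi theta series
  have hθ := ((summable_jacobiTheta₂_term_iff (a * Complex.I) (b * Complex.I)).2
    (by simpa using hb)).norm.mul_left (exp (-x ^ 2 * T ^ 2 / 2))
  refine hθ.congr fun j => ?_
  rw [norm_jacobiTheta₂_term, ← exp_add]
  simp only [Complex.mul_im, Complex.ofReal_re, Complex.ofReal_im, Complex.I_re, Complex.I_im,
    mul_zero, mul_one, a, b]
  congr 1
  field_simp
  ring

theorem le_abs_add_two_int_mul_pi {a x : ℝ} (hx : x ∈ Icc a (2 * π - a)) (j : ℤ) :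
    a ≤ |x + 2 * j * π| := by
  rcases le_or_gt 0 j with hj | hj
  · have : (0 : ℝ) ≤ j := by exact_mod_cast hj
    exact le_abs.2 (Or.inl (by nlinarith [pi_pos, hx.1]))
  · have : (j : ℝ) ≤ -1 := by exact_mod_cast Int.le_sub_one_of_lt hj
    exact le_abs.2 (Or.inr (by nlinarith [pi_pos, hx.2]))

theorem stmt_1 (T : ℝ) (hT : 1 / π ≤ T) :
    ConvexOn ℝ (Set.Icc (1 / T) (2 * π - 1 / T)) (periodicGaussian T) := by
  have hT₀ : 0 < T := (one_div_pos.2 pi_pos).trans_le hT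
  have hsum (x : ℝ) : Summable fun j : ℤ => exp (-(x + 2 * j * π) ^ 2 * T ^ 2 / 2) :=
    (summable_exp_neg_sq_add_int_mul x (by positivity : 2 * π ≠ 0) hT₀.ne').congr
      fun j => by ring_nf
  have hZ : 0 < ∑' j : ℤ, exp (-(2 * j * π) ^ 2 * T ^ 2 / 2) := by
    simpa using (hsum 0).tsum_pos (fun _ => (exp_pos _).le) 0 (exp_pos _)
  have hterm (j : ℤ) : ConvexOn ℝ (Icc (1 / T) (2 * π - 1 / T))
      fun x => exp (-(x + 2 * j * π) ^ 2 * T ^ 2 / 2) := by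
    refine convexOn_exp_neg_sq_mul_sq (convex_Icc _ _) fun x hx => ?_
    rw [one_le_sq_iff_one_le_abs, abs_mul, abs_of_pos hT₀, ← div_le_iff₀ hT₀]
    exact le_abs_add_two_int_mul_pi hx j
  have hnum := convexOn_tsum (convex_Icc _ _) hterm fun x _ => hsum x
  exact (hnum.smul (inv_nonneg.2 hZ.le)).congr fun x _ => by
    simp only [periodicGaussian, smul_eq_mul, inv_mul_eq_div]
end

section
/- Let T ≥ 2/π. Then the periodic Gaussian Φ_T is T²-smooth; that is, |Φ_T''(x)| ≤ T² for all x ∈ ℝ. -/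
open Real

/-! By Poisson summation, `Φ_T(x) = θ(s)⁻¹ ∑ₙ e^{-s n²} cos (n x)` with `s = 1 / (2 T²)` and
`θ(s) = ∑ₙ e^{-s n²}`, so `|Φ_T''| ≤ θ(s)⁻¹ ∑ₙ n² e^{-s n²} = -θ'(s) / θ(s)`. Jacobi's
transformation `√s θ(s) = √π θ(π² / s)` shows that `√s θ(s)` is increasing in `s`, and the
nonnegativity of its derivative is exactly `-θ'(s) ≤ θ(s) / (2 s) = T² θ(s)`. -/

noncomputable def realTheta (s : ℝ) : ℝ := ∑' n : ℤ, exp (-s * n ^ 2)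

theorem summable_pow_mul_exp_neg_mul_sq {c : ℝ} (hc : 0 < c) (k : ℕ) :
    Summable fun n : ℤ => (n : ℝ) ^ k * exp (-c * n ^ 2) := by
  refine .of_norm ?_
  simpa [mul_div_cancel₀ _ pi_pos.ne', ← mul_assoc] using
    summable_pow_mul_jacobiTheta₂_term_bound 0 (div_pos hc pi_pos) k

theorem summable_exp_neg_mul_sq {c : ℝ} (hc : 0 < c) :
    Summable fun n : ℤ => exp (-c * n ^ 2) := by
  simpa using summable_pow_mul_exp_neg_mul_sq hc 0

theorem one_le_realTheta {s : ℝ} (hs : 0 < s) : 1 ≤ realTheta s := by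
  simpa [realTheta] using (summable_exp_neg_mul_sq hs).le_tsum 0 fun n _ => (exp_pos _).le

theorem sqrt_mul_realTheta {s : ℝ} (hs : 0 < s) :
    √s * realTheta s = √π * realTheta (π ^ 2 / s) := by
  have h := tsum_exp_neg_mul_int_sq (div_pos hs pi_pos)
  simp only [← sqrt_eq_rpow, show -π * (s / π) = -s by field_simp,
    show -π / (s / π) = -(π ^ 2 / s) by field_simp] at h
  rw [realTheta, realTheta, h, sqrt_div' _ pi_pos.le]
  field_simp

theorem monotoneOn_sqrt_mul_realTheta : MonotoneOn (fun s => √s * realTheta s) (Set.Ioi 0) := by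
  intro s (hs : 0 < s) t (ht : 0 < t) hst
  show √s * realTheta s ≤ √t * realTheta t
  rw [sqrt_mul_realTheta hs, sqrt_mul_realTheta ht]
  gcongr
  refine Summable.tsum_le_tsum (fun n => ?_) (summable_exp_neg_mul_sq (by positivity))
    (summable_exp_neg_mul_sq (by positivity))
  gcongr

theorem hasDerivAt_realTheta {s : ℝ} (hs : 0 < s) :
    HasDerivAt realTheta (-∑' n : ℤ, (n : ℝ) ^ 2 * exp (-s * n ^ 2)) s := by
  rw [← tsum_neg]
  refine hasDerivAt_tsum_of_isPreconnected
    (g' := fun (n : ℤ) t => -((n : ℝ) ^ 2 * exp (-t * n ^ 2)))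
    (summable_pow_mul_exp_neg_mul_sq (half_pos hs) 2) isOpen_Ioi isPreconnected_Ioi
    (fun n t _ => ?_) (fun n t ht => ?_) (half_lt_self hs)
    (summable_exp_neg_mul_sq hs) (half_lt_self hs)
  · simpa [mul_comm] using ((hasDerivAt_id t).neg.mul_const ((n : ℝ) ^ 2)).exp
  · rw [norm_neg, norm_mul, norm_of_nonneg (sq_nonneg _), norm_of_nonneg (exp_pos _).le]
    gcongr
    exact ht.le

theorem tsum_sq_mul_exp_neg_mul_sq_le {s : ℝ} (hs : 0 < s) :
    ∑' n : ℤ, (n : ℝ) ^ 2 * exp (-s * n ^ 2) ≤ realTheta s / (2 * s) := by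
  have hderiv := ((hasDerivAt_sqrt hs.ne').mul (hasDerivAt_realTheta hs)).hasDerivWithinAt
    (s := Set.Ioi s)
  have hacc : AccPt s (Filter.principal (Set.Ioi s)) := by
    rw [accPt_principal_iff_nhdsWithin]
    simpa using (inferInstance : (nhdsWithin s (Set.Ioi s)).NeBot)
  have hnonneg := hderiv.nonneg_of_monotoneOn hacc
    (monotoneOn_sqrt_mul_realTheta.mono (Set.Ioi_subset_Ioi hs.le))
  set A := ∑' n : ℤ, (n : ℝ) ^ 2 * exp (-s * n ^ 2)
  rw [le_div_iff₀ (by positivity)]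
  field_simp at hnonneg
  rw [sq_sqrt hs.le] at hnonneg
  linarith

theorem hasDerivAt_tsum_mul_cos {a : ℤ → ℝ} (ha : Summable a)
    (ha' : Summable fun n : ℤ => n * a n) (y : ℝ) :
    HasDerivAt (fun y => ∑' n : ℤ, a n * cos (n * y)) (∑' n : ℤ, -(n * a n) * sin (n * y)) y := by
  refine hasDerivAt_tsum (g := fun (n : ℤ) y => a n * cos (n * y))
    (g' := fun (n : ℤ) y => -(n * a n) * sin (n * y)) ha'.abs (fun n t => ?_)
    (fun n t => ?_) (y₀ := 0) (by simpa using ha) y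
  · exact (((hasDerivAt_id t).const_mul (n : ℝ)).cos.const_mul (a n)).congr_deriv
      (by rw [id, mul_one]; ring)
  · rw [norm_mul, norm_neg, norm_eq_abs]
    exact mul_le_of_le_one_right (abs_nonneg _) (abs_sin_le_one _)

theorem hasDerivAt_tsum_mul_sin {b : ℤ → ℝ} (hb : Summable fun n : ℤ => n * b n) (y : ℝ) :
    HasDerivAt (fun y => ∑' n : ℤ, b n * sin (n * y)) (∑' n : ℤ, n * b n * cos (n * y)) y := by
  refine hasDerivAt_tsum (g := fun (n : ℤ) y => b n * sin (n * y))
    (g' := fun (n : ℤ) y => n * b n * cos (n * y)) hb.abs (fun n t => ?_)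
    (fun n t => ?_) (y₀ := 0) (by simp) y
  · exact (((hasDerivAt_id t).const_mul (n : ℝ)).sin.const_mul (b n)).congr_deriv
      (by rw [id, mul_one]; ring)
  · rw [norm_mul, norm_eq_abs]
    exact mul_le_of_le_one_right (abs_nonneg _) (abs_cos_le_one _)

theorem deriv_deriv_tsum_mul_cos {a : ℤ → ℝ} (ha : Summable a)
    (ha' : Summable fun n : ℤ => n * a n) (ha'' : Summable fun n : ℤ => n ^ 2 * a n) :
    deriv (deriv fun y => ∑' n : ℤ, a n * cos (n * y)) =
      fun y => -∑' n : ℤ, n ^ 2 * a n * cos (n * y) := by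
  have h1 : deriv (fun y => ∑' n : ℤ, a n * cos (n * y)) =
      fun y => ∑' n : ℤ, -(n * a n) * sin (n * y) :=
    funext fun y => (hasDerivAt_tsum_mul_cos ha ha' y).deriv
  have hb : Summable fun n : ℤ => n * -(n * a n) := by
    simpa [← mul_assoc, ← sq] using ha''.neg
  funext y
  rw [h1, (hasDerivAt_tsum_mul_sin hb y).deriv, ← tsum_neg]
  congr 1 with n
  ring

theorem abs_tsum_mul_cos_le {a : ℤ → ℝ} (ha : Summable a) (y : ℝ) :
    |∑' n : ℤ, a n * cos (n * y)| ≤ ∑' n : ℤ, |a n| := by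
  have hle : ∀ n : ℤ, ‖a n * cos (n * y)‖ ≤ |a n| := fun n => by
    rw [norm_mul, norm_eq_abs]
    exact mul_le_of_le_one_right (abs_nonneg _) (abs_cos_le_one _)
  exact (norm_tsum_le_tsum_norm (ha.abs.of_nonneg_of_le (fun _ => norm_nonneg _) hle)).trans
    (Summable.tsum_le_tsum hle (ha.abs.of_nonneg_of_le (fun _ => norm_nonneg _) hle) ha.abs)

theorem tsum_exp_neg_sq_add_two_pi_mul_eq_tsum_cexp {T : ℝ} (hT : T ≠ 0) (x : ℝ) :
    ∑' j : ℤ, (exp (-(x + 2 * j * π) ^ 2 * T ^ 2 / 2) : ℂ) =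
      (√(2 * π * T ^ 2))⁻¹ *
        ∑' n : ℤ, exp (-(1 / (2 * T ^ 2)) * n ^ 2) * Complex.exp ((n * x : ℝ) * Complex.I) := by
  have ha : 0 < 2 * π * T ^ 2 := by positivity
  -- complete the square: the factor `exp (T² x² / 2)` is common to both sides
  have h := Complex.tsum_exp_neg_quadratic (a := (2 * π * T ^ 2 : ℝ)) (by rwa [Complex.ofReal_re])
    (-(T ^ 2 * x) : ℝ)
  have hT' : (T : ℂ) ≠ 0 := Complex.ofReal_ne_zero.2 hT
  have hL : ∀ n : ℤ, -π * ((2 * π * T ^ 2 : ℝ) : ℂ) * n ^ 2 + 2 * π * ((-(T ^ 2 * x) : ℝ) : ℂ) * n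
      = T ^ 2 * x ^ 2 / 2 + ((-(x + 2 * n * π) ^ 2 * T ^ 2 / 2 : ℝ) : ℂ) := fun n => by
    push_cast; ring
  have hR : ∀ n : ℤ, -π / ((2 * π * T ^ 2 : ℝ) : ℂ) * (n + Complex.I * ((-(T ^ 2 * x) : ℝ) : ℂ)) ^ 2
      = T ^ 2 * x ^ 2 / 2 + (((-(1 / (2 * T ^ 2)) * n ^ 2 : ℝ) : ℂ) + (n * x : ℝ) * Complex.I) :=
    fun n => by
    push_cast
    field_simp
    linear_combination -(T ^ 4 * x ^ 2) * Complex.I_sq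
  simp only [hL, hR, Complex.exp_add, tsum_mul_left, ← Complex.ofReal_exp] at h
  rw [mul_left_comm] at h
  convert mul_left_cancel₀ (Complex.exp_ne_zero _) h using 2
  rw [one_div, sqrt_eq_rpow, Complex.ofReal_inv, Complex.ofReal_cpow ha.le]
  norm_num

theorem tsum_exp_neg_sq_add_two_pi_mul_eq_tsum_cos {T : ℝ} (hT : T ≠ 0) (x : ℝ) :
    ∑' j : ℤ, exp (-(x + 2 * j * π) ^ 2 * T ^ 2 / 2) =
      (√(2 * π * T ^ 2))⁻¹ * ∑' n : ℤ, exp (-(1 / (2 * T ^ 2)) * n ^ 2) * cos (n * x) := by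
  have hsum : Summable fun n : ℤ =>
      (exp (-(1 / (2 * T ^ 2)) * n ^ 2) : ℂ) * Complex.exp ((n * x : ℝ) * Complex.I) := by
    refine .of_norm <|
      (summable_exp_neg_mul_sq (c := 1 / (2 * T ^ 2)) (by positivity)).congr fun n => ?_
    rw [norm_mul, Complex.norm_real, norm_of_nonneg (exp_pos _).le, Complex.norm_exp_ofReal_mul_I,
      mul_one]
  have h := congrArg Complex.re (tsum_exp_neg_sq_add_two_pi_mul_eq_tsum_cexp hT x)
  rw [← Complex.ofReal_tsum, Complex.ofReal_re] at h
  rw [h, Complex.re_ofReal_mul, Complex.re_tsum hsum]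
  simp only [Complex.re_ofReal_mul, Complex.exp_ofReal_mul_I_re]

theorem periodicGaussian_eq_inv_mul_tsum_cos {T : ℝ} (hT : T ≠ 0) :
    periodicGaussian T = fun x => (realTheta (1 / (2 * T ^ 2)))⁻¹ *
      ∑' n : ℤ, exp (-(1 / (2 * T ^ 2)) * n ^ 2) * cos (n * x) := by
  funext x
  have hden := tsum_exp_neg_sq_add_two_pi_mul_eq_tsum_cos hT 0
  simp only [zero_add, mul_zero, cos_zero, mul_one] at hden
  rw [periodicGaussian, tsum_exp_neg_sq_add_two_pi_mul_eq_tsum_cos hT x, hden, realTheta,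
    mul_div_mul_left _ _ (by positivity), div_eq_inv_mul]

theorem stmt_2 (T : ℝ) (hT : 2 / π ≤ T) :
    ∀ x : ℝ, |deriv (deriv (periodicGaussian T)) x| ≤ T ^ 2 := by
  intro x
  have hT0 : 0 < T := (by positivity : (0 : ℝ) < 2 / π).trans_le hT
  set s := 1 / (2 * T ^ 2)
  have hs : 0 < s := by positivity
  have hθ : 0 < realTheta s := one_pos.trans_le (one_le_realTheta hs)
  rw [periodicGaussian_eq_inv_mul_tsum_cos hT0.ne']
  simp only [deriv_const_mul_field']
  rw [deriv_deriv_tsum_mul_cos (summable_exp_neg_mul_sq hs)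
    (by simpa using summable_pow_mul_exp_neg_mul_sq hs 1) (summable_pow_mul_exp_neg_mul_sq hs 2)]
  calc |(realTheta s)⁻¹ * -∑' n : ℤ, (n : ℝ) ^ 2 * exp (-s * n ^ 2) * cos (n * x)|
      ≤ (realTheta s)⁻¹ * ∑' n : ℤ, |(n : ℝ) ^ 2 * exp (-s * n ^ 2)| := by
        rw [abs_mul, abs_neg, abs_of_pos (inv_pos.2 hθ)]
        gcongr
        exact abs_tsum_mul_cos_le (summable_pow_mul_exp_neg_mul_sq hs 2) x
    _ ≤ (realTheta s)⁻¹ * (realTheta s / (2 * s)) := by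
        have habs (n : ℤ) : |(n : ℝ) ^ 2 * exp (-s * n ^ 2)| = (n : ℝ) ^ 2 * exp (-s * n ^ 2) :=
          abs_of_nonneg (by positivity)
        simp only [habs]
        gcongr
        exact tsum_sq_mul_exp_neg_mul_sq_le hs
    _ = 1 / (2 * s) := by field_simp
    _ = T ^ 2 := by simp only [s]; field_simp
end

section
/- Let T ≥ 2/π. Then the function 1 - Φ_T is (T²/2)-strongly convex on [-1/(2T), 1/(2T)]; equivalently, -Φ_T''(x) ≥ T²/2 for all x with |x| ≤ 1/(2T). -/
open Real

/-!
Differentiating the periodisation termwise (on a bounded set the translates of a function with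
Gaussian decay are dominated by a geometric series in `|j|`), `-Φ_T''(x)` is
`Z⁻¹ ∑ⱼ T² (1 - v) e^{-v/2}` with `v = (x + 2jπ)² T²`. For `|x| ≤ 1/(2T)` the term `j = 0` is
at least `(21/32) T²`. For `j ≠ 0`, `Tπ ≥ 2` forces `v ≥ 12 |j|`, so those terms are at most
`3 T² e^{-4|j|}` and `Z ≤ 1 + 2/(e⁴ - 1)`; as `e⁴ > 54` the remaining mass exceeds `T² Z / 2`.
-/

noncomputable def gauss (T u : ℝ) : ℝ := exp (-u ^ 2 * T ^ 2 / 2)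

noncomputable def gaussDeriv (T u : ℝ) : ℝ := -(T ^ 2 * u) * gauss T u

noncomputable def gaussDeriv2 (T u : ℝ) : ℝ := T ^ 2 * (u ^ 2 * T ^ 2 - 1) * gauss T u

lemma periodicGaussian_eq (T : ℝ) :
    periodicGaussian T =
      fun x ↦ (∑' j : ℤ, gauss T (x + 2 * j * π)) / ∑' j : ℤ, gauss T (2 * j * π) :=
  rfl

lemma hasDerivAt_gauss (T u : ℝ) : HasDerivAt (gauss T) (gaussDeriv T u) u := by
  have hg : gauss T = fun y ↦ exp (-T ^ 2 / 2 * y ^ 2) := by ext y; rw [gauss]; ring_nf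
  rw [hg]
  convert ((hasDerivAt_pow 2 u).const_mul (-T ^ 2 / 2)).exp using 1
  rw [gaussDeriv, hg]
  push_cast
  ring

lemma hasDerivAt_gaussDeriv (T u : ℝ) : HasDerivAt (gaussDeriv T) (gaussDeriv2 T u) u := by
  have h := (((hasDerivAt_id' u).const_mul (T ^ 2)).fun_neg).fun_mul (hasDerivAt_gauss T u)
  refine h.congr_deriv ?_
  simp only [gaussDeriv2, gaussDeriv]; ring

lemma mul_exp_neg_half_le (v : ℝ) : v * exp (-v / 2) ≤ 3 * exp (-v / 3) := by
  rcases le_or_gt v 0 with hv | hv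
  · nlinarith [exp_pos (-v / 2), exp_pos (-v / 3)]
  -- `v / 3 ≤ (1 + v / 12) ^ 2 ≤ exp (v / 12) ^ 2 = exp (v / 6)`
  have h12 : 1 + v / 12 ≤ exp (v / 12) := by linarith [add_one_le_exp (v / 12)]
  have h6 : exp (v / 12) ^ 2 = exp (v / 6) := by rw [← exp_nat_mul]; ring_nf
  have hv6 : v ≤ 3 * exp (v / 6) := by nlinarith [sq_nonneg (1 - v / 12)]
  calc v * exp (-v / 2) ≤ 3 * exp (v / 6) * exp (-v / 2) := by gcongr
    _ = 3 * exp (-v / 3) := by rw [mul_assoc, ← exp_add]; ring_nf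

lemma abs_gauss_le (T u : ℝ) : |gauss T u| ≤ 1 * exp (-u ^ 2 * T ^ 2 / 3) := by
  rw [gauss, abs_of_pos (exp_pos _), one_mul, exp_le_exp]
  nlinarith [sq_nonneg u, sq_nonneg T, mul_nonneg (sq_nonneg u) (sq_nonneg T)]

lemma abs_gaussDeriv_le (T u : ℝ) :
    |gaussDeriv T u| ≤ (T ^ 2 + 3) * exp (-u ^ 2 * T ^ 2 / 3) := by
  have hv := mul_exp_neg_half_le (u ^ 2 * T ^ 2)
  have hlt : exp (-(u ^ 2 * T ^ 2) / 2) ≤ exp (-(u ^ 2 * T ^ 2) / 3) := by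
    rw [exp_le_exp]; nlinarith [mul_nonneg (sq_nonneg u) (sq_nonneg T)]
  have hu : T ^ 2 * |u| ≤ (T ^ 2 + u ^ 2 * T ^ 2) / 2 := by
    nlinarith [sq_nonneg (|u| - 1), sq_abs u, sq_nonneg T]
  rw [gaussDeriv, gauss, abs_mul, abs_of_pos (exp_pos _), abs_neg, abs_mul,
    abs_of_nonneg (sq_nonneg T)]
  simp only [neg_mul, neg_div] at hv hlt ⊢
  nlinarith [exp_pos (-(u ^ 2 * T ^ 2 / 2)), sq_nonneg T]

lemma abs_gaussDeriv2_le (T u : ℝ) :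
    |gaussDeriv2 T u| ≤ 4 * T ^ 2 * exp (-u ^ 2 * T ^ 2 / 3) := by
  have hv := mul_exp_neg_half_le (u ^ 2 * T ^ 2)
  have hlt : exp (-(u ^ 2 * T ^ 2) / 2) ≤ exp (-(u ^ 2 * T ^ 2) / 3) := by
    rw [exp_le_exp]; nlinarith [mul_nonneg (sq_nonneg u) (sq_nonneg T)]
  have h1 : |u ^ 2 * T ^ 2 - 1| ≤ u ^ 2 * T ^ 2 + 1 := by
    rw [abs_le]; constructor <;> nlinarith [mul_nonneg (sq_nonneg u) (sq_nonneg T)]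
  rw [gaussDeriv2, gauss, abs_mul, abs_mul, abs_of_pos (exp_pos _), abs_of_nonneg (sq_nonneg T)]
  simp only [neg_mul, neg_div] at hv hlt ⊢
  calc T ^ 2 * |u ^ 2 * T ^ 2 - 1| * exp (-(u ^ 2 * T ^ 2 / 2))
      ≤ T ^ 2 * (u ^ 2 * T ^ 2 + 1) * exp (-(u ^ 2 * T ^ 2 / 2)) := by gcongr
    _ ≤ 4 * T ^ 2 * exp (-(u ^ 2 * T ^ 2 / 3)) := by nlinarith [sq_nonneg T]

lemma abs_gaussDeriv2_le_of_one_le {T u : ℝ} (h : 1 ≤ u ^ 2 * T ^ 2) :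
    |gaussDeriv2 T u| ≤ 3 * T ^ 2 * exp (-u ^ 2 * T ^ 2 / 3) := by
  have hv := mul_exp_neg_half_le (u ^ 2 * T ^ 2)
  rw [gaussDeriv2, gauss, abs_mul, abs_mul, abs_of_pos (exp_pos _), abs_of_nonneg (sq_nonneg T),
    abs_of_nonneg (by linarith)]
  simp only [neg_mul, neg_div] at hv ⊢
  nlinarith [sq_nonneg T, exp_pos (-(u ^ 2 * T ^ 2 / 2))]

lemma neg_gaussDeriv2_ge {T u : ℝ} (h : u ^ 2 * T ^ 2 ≤ 1 / 4) :
    21 / 32 * T ^ 2 ≤ -gaussDeriv2 T u := by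
  have hexp : 7 / 8 ≤ exp (-u ^ 2 * T ^ 2 / 2) := by
    nlinarith [add_one_le_exp (-u ^ 2 * T ^ 2 / 2)]
  have h0 : 0 ≤ u ^ 2 * T ^ 2 := by positivity
  rw [gaussDeriv2, gauss]
  nlinarith [mul_le_mul (by linarith : 3 / 4 ≤ 1 - u ^ 2 * T ^ 2) hexp (by norm_num) (by linarith),
    sq_nonneg T]

lemma sub_abs_le_abs_add_two_mul_int_mul_pi (x : ℝ) (j : ℤ) :
    2 * π * j.natAbs - |x| ≤ |x + 2 * j * π| := by
  have h : |2 * (j : ℝ) * π| = 2 * π * j.natAbs := by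
    rw [abs_mul, abs_mul, abs_two, abs_of_pos pi_pos, Nat.cast_natAbs, Int.cast_abs]; ring
  simpa [h, add_comm] using abs_sub_abs_le_abs_add (2 * (j : ℝ) * π) x

lemma exp_neg_sq_div_three_le (T : ℝ) {R y : ℝ} (hR : 0 ≤ R) (hy : |y| ≤ R) (j : ℤ) :
    exp (-(y + 2 * j * π) ^ 2 * T ^ 2 / 3)
      ≤ exp (R ^ 2 * T ^ 2) * exp (-(4 * π * R * T ^ 2 / 3)) ^ j.natAbs := by
  have hlow := sub_abs_le_abs_add_two_mul_int_mul_pi y j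
  -- `(|u| - R) ^ 2 ≥ 0` turns the lower bound on `|u|` into one on `u ^ 2` that is linear in `|j|`
  have hsq : 4 * π * R * j.natAbs - 3 * R ^ 2 ≤ (y + 2 * j * π) ^ 2 := by
    nlinarith [sq_nonneg (|y + 2 * j * π| - R), sq_abs (y + 2 * j * π)]
  rw [← exp_nat_mul, ← exp_add, exp_le_exp]
  nlinarith [mul_le_mul_of_nonneg_right hsq (sq_nonneg T)]

lemma hasSum_pow_natAbs {q : ℝ} (hq0 : 0 ≤ q) (hq1 : q < 1) :
    HasSum (fun j : ℤ ↦ q ^ j.natAbs) ((1 + q) / (1 - q)) := by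
  have hgeom := hasSum_geometric_of_lt_one hq0 hq1
  have hneg : (fun n : ℕ ↦ q ^ (-((n : ℤ) + 1)).natAbs) = fun n ↦ q * q ^ n := by
    funext n; rw [← pow_succ']; congr 1
  have h := HasSum.of_nat_of_neg_add_one (f := fun j : ℤ ↦ q ^ j.natAbs)
    (by simpa only [Int.natAbs_natCast] using hgeom) (hneg ▸ hgeom.mul_left q)
  convert h using 1
  field_simp [(sub_pos.2 hq1).ne']

lemma abs_tsum_sub_apply_zero_le {f : ℤ → ℝ} {c q : ℝ} (hq0 : 0 ≤ q) (hq1 : q < 1)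
    (hf : ∀ j ≠ 0, |f j| ≤ c * q ^ j.natAbs) :
    |∑' j, f j - f 0| ≤ 2 * c * (q / (1 - q)) := by
  have hsum := (hasSum_pow_natAbs hq0 hq1).mul_left c
  have hf' : Summable f := Summable.of_norm_bounded_eventually (E := ℝ) hsum.summable <|
    (Set.finite_singleton 0).subset fun j hj ↦ by_contra fun h ↦ hj (hf j h)
  rw [hf'.tsum_eq_add_tsum_ite 0, add_sub_cancel_left]
  have hval : c * ((1 + q) / (1 - q)) - c * q ^ (0 : ℤ).natAbs = 2 * c * (q / (1 - q)) := by
    field_simp [(sub_pos.2 hq1).ne']; ring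
  refine tsum_of_norm_bounded (E := ℝ) (hval ▸ hasSum_ite_sub_hasSum hsum 0) fun j ↦ ?_
  by_cases hj : j = 0
  · simp [hj]
  · simpa [hj] using hf j hj

lemma abs_translate_le {g : ℝ → ℝ} {C T R y : ℝ} (hg : ∀ u, |g u| ≤ C * exp (-u ^ 2 * T ^ 2 / 3))
    (hR : 0 ≤ R) (hy : |y| ≤ R) (j : ℤ) :
    |g (y + 2 * j * π)| ≤ C * exp (R ^ 2 * T ^ 2) * exp (-(4 * π * R * T ^ 2 / 3)) ^ j.natAbs := by
  have hC : 0 ≤ C := nonneg_of_mul_nonneg_left ((abs_nonneg _).trans (hg 0)) (exp_pos _)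
  calc |g (y + 2 * j * π)| ≤ C * exp (-(y + 2 * j * π) ^ 2 * T ^ 2 / 3) := hg _
    _ ≤ C * (exp (R ^ 2 * T ^ 2) * exp (-(4 * π * R * T ^ 2 / 3)) ^ j.natAbs) := by
      gcongr; exact exp_neg_sq_div_three_le T hR hy j
    _ = _ := by ring

lemma hasDerivAt_tsum_translate {f f' : ℝ → ℝ} {C₀ C₁ T : ℝ} (hT : T ≠ 0)
    (hf : ∀ u, HasDerivAt f (f' u) u) (hf₀ : ∀ u, |f u| ≤ C₀ * exp (-u ^ 2 * T ^ 2 / 3))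
    (hf₁ : ∀ u, |f' u| ≤ C₁ * exp (-u ^ 2 * T ^ 2 / 3)) (x : ℝ) :
    HasDerivAt (fun y ↦ ∑' j : ℤ, f (y + 2 * j * π)) (∑' j : ℤ, f' (x + 2 * j * π)) x := by
  set R := |x| + 1
  have hR : 0 < R := by positivity
  set q := exp (-(4 * π * R * T ^ 2 / 3))
  have hq1 : q < 1 := exp_lt_one_iff.2 (neg_neg_of_pos (by positivity))
  have hgeom := (hasSum_pow_natAbs (exp_pos _).le hq1).summable
  refine hasDerivAt_tsum_of_isPreconnected (hgeom.mul_left (C₁ * exp (R ^ 2 * T ^ 2)))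
    Metric.isOpen_ball (convex_ball 0 R).isPreconnected
    (fun _ y _ ↦ HasDerivAt.comp_add_const y _ (hf _))
    (fun j y hy ↦ abs_translate_le hf₁ hR.le (mem_ball_zero_iff.1 hy).le j)
    (Metric.mem_ball_self hR) ?_ (mem_ball_zero_iff.2 (lt_add_one _))
  exact .of_norm_bounded (hgeom.mul_left (C₀ * exp (R ^ 2 * T ^ 2)))
    fun j ↦ abs_translate_le hf₀ hR.le (by simpa using hR.le) j

lemma deriv_deriv_periodicGaussian {T : ℝ} (hT : T ≠ 0) (x : ℝ) :
    deriv (deriv (periodicGaussian T)) x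
      = (∑' j : ℤ, gaussDeriv2 T (x + 2 * j * π)) / ∑' j : ℤ, gauss T (2 * j * π) := by
  have hderiv : deriv (periodicGaussian T)
      = fun y ↦ (∑' j : ℤ, gaussDeriv T (y + 2 * j * π)) / ∑' j : ℤ, gauss T (2 * j * π) := by
    funext y
    rw [periodicGaussian_eq]
    exact ((hasDerivAt_tsum_translate hT (hasDerivAt_gauss T) (abs_gauss_le T)
      (abs_gaussDeriv_le T) y).div_const _).deriv
  rw [hderiv]
  exact ((hasDerivAt_tsum_translate hT (hasDerivAt_gaussDeriv T) (abs_gaussDeriv_le T)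
    (abs_gaussDeriv2_le T) x).div_const _).deriv

lemma twelve_mul_natAbs_le {T x : ℝ} (hT : 2 ≤ T * π) (hx : |x| * T ≤ 1 / 2) {j : ℤ}
    (hj : j ≠ 0) : 12 * j.natAbs ≤ (x + 2 * j * π) ^ 2 * T ^ 2 := by
  have hT0 : 0 ≤ T := nonneg_of_mul_nonneg_left (by linarith) pi_pos
  have hn : (1 : ℝ) ≤ j.natAbs := by exact_mod_cast Int.natAbs_pos.2 hj
  have hlow := mul_le_mul_of_nonneg_right (sub_abs_le_abs_add_two_mul_int_mul_pi x j) hT0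
  have h72 : 7 / 2 * j.natAbs ≤ |x + 2 * j * π| * T := by nlinarith
  nlinarith [mul_self_le_mul_self (by positivity) h72, sq_abs (x + 2 * j * π)]

lemma abs_gaussDeriv2_translate_le {T x : ℝ} (hT : 2 ≤ T * π) (hx : |x| * T ≤ 1 / 2) {j : ℤ}
    (hj : j ≠ 0) : |gaussDeriv2 T (x + 2 * j * π)| ≤ 3 * T ^ 2 * exp (-4) ^ j.natAbs := by
  have hv := twelve_mul_natAbs_le hT hx hj
  have hn : (1 : ℝ) ≤ j.natAbs := by exact_mod_cast Int.natAbs_pos.2 hj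
  refine (abs_gaussDeriv2_le_of_one_le (by linarith)).trans ?_
  rw [← exp_nat_mul]
  gcongr
  linarith

lemma abs_gauss_translate_le {T x : ℝ} (hT : 2 ≤ T * π) (hx : |x| * T ≤ 1 / 2) {j : ℤ}
    (hj : j ≠ 0) : |gauss T (x + 2 * j * π)| ≤ 1 * exp (-4) ^ j.natAbs := by
  have hv := twelve_mul_natAbs_le hT hx hj
  rw [gauss, abs_of_pos (exp_pos _), one_mul, ← exp_nat_mul, exp_le_exp]
  linarith

lemma exp_neg_four_div_le : exp (-4) / (1 - exp (-4)) ≤ 1 / 53 := by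
  have h54 : 54 ≤ exp 4 :=
    calc (54 : ℝ) ≤ 2.7182818283 ^ 4 := by norm_num
      _ ≤ exp 1 ^ 4 := by gcongr; exact exp_one_gt_d9.le
      _ = exp 4 := by rw [← exp_nat_mul]; norm_num
  have h : 54 * exp (-4) ≤ 1 := by
    rw [exp_neg, ← div_eq_mul_inv, div_le_one (exp_pos _)]; exact h54
  rw [div_le_div_iff₀ (by linarith) (by norm_num)]
  linarith

theorem stmt_3 (T : ℝ) (hT : 2 / π ≤ T) :
    ∀ x : ℝ, |x| ≤ 1 / (2 * T) →
      T ^ 2 / 2 ≤ -(deriv (deriv (periodicGaussian T)) x) := by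
  intro x hx
  have hTπ : 2 ≤ T * π := (div_le_iff₀ pi_pos).1 hT
  have hT0 : 0 < T := (div_pos two_pos pi_pos).trans_le hT
  have hxT : |x| * T ≤ 1 / 2 := by
    rw [le_div_iff₀ (by positivity)] at hx; linarith
  have hq0 : 0 ≤ exp (-4) := (exp_pos _).le
  have hq1 : exp (-4) < 1 := exp_lt_one_iff.2 (by norm_num)
  have hZ := abs_tsum_sub_apply_zero_le (f := fun j : ℤ ↦ gauss T (2 * j * π)) (c := 1) hq0 hq1
    fun j hj ↦ by simpa using abs_gauss_translate_le hTπ (x := 0) (by simp) hj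
  have hS := abs_tsum_sub_apply_zero_le (f := fun j : ℤ ↦ gaussDeriv2 T (x + 2 * j * π)) hq0 hq1
    fun j hj ↦ abs_gaussDeriv2_translate_le hTπ hxT hj
  have hcentral := neg_gaussDeriv2_ge (T := T) (u := x)
    (by nlinarith [sq_abs x, mul_self_le_mul_self (by positivity) hxT])
  have hr := exp_neg_four_div_le
  have hgauss0 : gauss T 0 = 1 := by simp [gauss]
  simp only [Int.cast_zero, mul_zero, zero_mul, add_zero, hgauss0] at hZ hS
  rw [deriv_deriv_periodicGaussian hT0.ne', ← neg_div, le_div_iff₀ (by linarith [(abs_le.1 hZ).1])]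
  nlinarith [abs_le.1 hZ, abs_le.1 hS, sq_nonneg T]
end

section
/- For T ≥ 2/π, the sum Σ_{j=1}^∞ (4π²j²T² - 1)·exp(-2j²π²T²) is bounded above by 4π²T²·exp(-2π²T²), and this bound is at most 16/e⁸ < 0.0055. -/
open Real

private lemma tailb_stmt4 (x : ℝ) (hx : 8 ≤ x) (j : ℕ) (hj : 1 ≤ j) :
    (2 * ((j:ℝ)+1)^2 * x - 1) * Real.exp (-(((j:ℝ)+1)^2 * x)) ≤ Real.exp (-x) * (1/2)^j := by
  set n : ℝ := (j:ℝ)+1 with hn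
  have hn2 : 2 ≤ n := by
    have : (1:ℝ) ≤ (j:ℝ) := by exact_mod_cast hj
    simp [hn]; linarith
  have hxpos : (0:ℝ) < x := by linarith
  have ht : (16:ℝ) ≤ n^2*x := by nlinarith
  set t : ℝ := n^2*x with htdef
  clear_value t n
  have s1 : (2*n^2*x - 1) * Real.exp (-t) ≤ 2*t*Real.exp (-t) := by
    have := Real.exp_pos (-t)
    nlinarith
  have s2 : 2*t*Real.exp (-t) ≤ 4 * Real.exp (-(t/2)) := by
    have h1 : t/2 + 1 ≤ Real.exp (t/2) := Real.add_one_le_exp _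
    have h2 : Real.exp (t/2) * Real.exp (-t) = Real.exp (-(t/2)) := by
      rw [← Real.exp_add]; ring_nf
    have := Real.exp_pos (-t)
    nlinarith [Real.exp_pos (t/2)]
  have s3 : Real.exp (-(t/2)) ≤ Real.exp (-x) * Real.exp (-(4*n)) := by
    rw [← Real.exp_add]
    apply Real.exp_le_exp.mpr
    have h1 : (0:ℝ) ≤ (x-8)*(n^2-2) := mul_nonneg (by linarith) (by nlinarith)
    have h2 : (0:ℝ) ≤ (n-2)*(n+1) := mul_nonneg (by linarith) (by linarith)
    simp only [htdef]
    nlinarith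
  have s4 : 4 * Real.exp (-(4*n)) ≤ (1/2:ℝ)^j := by
    have he4 : Real.exp (-(4:ℝ)) ≤ 1/5 := by
      rw [Real.exp_neg]
      rw [inv_le_comm₀ (Real.exp_pos _) (by norm_num)]
      calc (1/5:ℝ)⁻¹ = 5 := by norm_num
        _ ≤ Real.exp 4 := by nlinarith [Real.add_one_le_exp (4:ℝ)]
    have hsplit : Real.exp (-(4*n)) = Real.exp (-(4:ℝ)) * (Real.exp (-(4:ℝ)))^j := by
      rw [← Real.exp_nat_mul, ← Real.exp_add]
      congr 1
      push_cast [hn]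
      ring
    rw [hsplit]
    have hp : (Real.exp (-(4:ℝ)))^j ≤ (1/2:ℝ)^j := by
      apply pow_le_pow_left₀ (le_of_lt (Real.exp_pos _))
      linarith
    nlinarith [pow_nonneg (le_of_lt (Real.exp_pos (-(4:ℝ)))) j,
      pow_nonneg (by norm_num : (0:ℝ) ≤ 1/2) j, Real.exp_pos (-(4:ℝ))]
  calc (2*n^2*x - 1) * Real.exp (-t) ≤ 2*t*Real.exp (-t) := s1
    _ ≤ 4 * Real.exp (-(t/2)) := s2
    _ ≤ 4 * (Real.exp (-x) * Real.exp (-(4*n))) := by nlinarith [Real.exp_pos (-x)]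
    _ = Real.exp (-x) * (4 * Real.exp (-(4*n))) := by ring
    _ ≤ Real.exp (-x) * (1/2)^j := by
        apply mul_le_mul_of_nonneg_left s4 (le_of_lt (Real.exp_pos _))

private lemma part2_stmt4 (x : ℝ) (hx : 8 ≤ x) : 2 * x * Real.exp (-x) ≤ 16 / Real.exp 8 := by
  rw [div_eq_mul_inv, ← Real.exp_neg]
  have h1 : x - 7 ≤ Real.exp (x - 8) := by nlinarith [Real.add_one_le_exp (x-8)]
  have h2 : Real.exp (-x) * Real.exp (x - 8) = Real.exp (-8) := by
    rw [← Real.exp_add]; ring_nf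
  nlinarith [Real.exp_pos (-x), Real.exp_pos (x-8), Real.exp_pos (-(8:ℝ)),
    mul_pos (Real.exp_pos (-x)) (Real.exp_pos (x-8))]

private lemma part3_stmt4 : (16 : ℝ) / Real.exp 8 < 0.0055 := by
  have h8 : Real.exp 8 = Real.exp 1 ^ 8 := by
    rw [← Real.exp_nat_mul]; norm_num
  have he : (2.7182818283 : ℝ) < Real.exp 1 := Real.exp_one_gt_d9
  have h : (2910 : ℝ) < Real.exp 8 := by
    rw [h8]
    calc (2910:ℝ) < 2.7182818283 ^ 8 := by norm_num
      _ < Real.exp 1 ^ 8 := by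
        apply pow_lt_pow_left₀ he (by norm_num)
        norm_num
  rw [div_lt_iff₀ (by positivity)]
  nlinarith

theorem stmt_4 (T : ℝ) (hT : 2 / π ≤ T) :
    (∑' j : ℕ, (4 * π ^ 2 * ((j : ℝ) + 1) ^ 2 * T ^ 2 - 1) *
        Real.exp (-2 * ((j : ℝ) + 1) ^ 2 * π ^ 2 * T ^ 2))
      ≤ 4 * π ^ 2 * T ^ 2 * Real.exp (-2 * π ^ 2 * T ^ 2) ∧
    4 * π ^ 2 * T ^ 2 * Real.exp (-2 * π ^ 2 * T ^ 2) ≤ 16 / Real.exp 8 ∧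
    (16 : ℝ) / Real.exp 8 < 0.0055 := by
  have hπ := Real.pi_pos
  set x : ℝ := 2 * π^2 * T^2 with hxdef
  have hT0 : 0 < T := lt_of_lt_of_le (by positivity) hT
  have hπT : 2 ≤ π * T := by
    rw [div_le_iff₀ hπ] at hT; linarith
  have hx : 8 ≤ x := by
    have : 4 ≤ (π*T)^2 := by nlinarith
    rw [hxdef]; nlinarith
  have hrhs : 4 * π ^ 2 * T ^ 2 * Real.exp (-2 * π ^ 2 * T ^ 2) = 2 * x * Real.exp (-x) := by
    rw [hxdef, show -2*π^2*T^2 = -(2*π^2*T^2) by ring]; ring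
  refine ⟨?_, ?_, part3_stmt4⟩
  · have hf : ∀ j : ℕ, (4 * π ^ 2 * ((j : ℝ) + 1) ^ 2 * T ^ 2 - 1) *
          Real.exp (-2 * ((j : ℝ) + 1) ^ 2 * π ^ 2 * T ^ 2)
        = (2 * ((j:ℝ)+1)^2 * x - 1) * Real.exp (-(((j:ℝ)+1)^2 * x)) := by
      intro j
      rw [hxdef]
      congr 1
      · ring
      · congr 1; ring
    simp only [hf, hrhs]
    set b : ℕ → ℝ := fun j => Real.exp (-x) * (1/2)^j +
        (if j = 0 then (2*x - 2) * Real.exp (-x) else 0) with hbdef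
    have hb1 : Summable (fun j : ℕ => Real.exp (-x) * (1/2)^j) :=
      (summable_geometric_of_lt_one (by norm_num) (by norm_num)).mul_left _
    have hb2sum : HasSum (fun j : ℕ => if j = 0 then (2*x - 2) * Real.exp (-x) else 0)
        ((2*x - 2) * Real.exp (-x)) := hasSum_ite_eq 0 _
    have hbsum : Summable b := hb1.add hb2sum.summable
    have hble : ∀ j : ℕ,
        (2 * ((j:ℝ)+1)^2 * x - 1) * Real.exp (-(((j:ℝ)+1)^2 * x)) ≤ b j := by
      intro j
      rcases Nat.eq_zero_or_pos j with h0 | h1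
      · subst h0
        simp [hbdef]
        ring_nf
        norm_num
      · have := tailb_stmt4 x hx j h1
        simp only [hbdef, if_neg (Nat.pos_iff_ne_zero.mp h1)]
        linarith
    have hnonneg : ∀ j : ℕ,
        0 ≤ (2 * ((j:ℝ)+1)^2 * x - 1) * Real.exp (-(((j:ℝ)+1)^2 * x)) := by
      intro j
      have hj : (1:ℝ) ≤ ((j:ℝ)+1)^2 := by nlinarith [Nat.cast_nonneg (α := ℝ) j]
      have : (0:ℝ) ≤ 2 * ((j:ℝ)+1)^2 * x - 1 := by nlinarith
      positivity
    have hfs : Summable (fun j : ℕ =>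
        (2 * ((j:ℝ)+1)^2 * x - 1) * Real.exp (-(((j:ℝ)+1)^2 * x))) :=
      Summable.of_nonneg_of_le hnonneg hble hbsum
    have htsumb : ∑' j : ℕ, b j = 2 * x * Real.exp (-x) := by
      rw [hbdef, Summable.tsum_add hb1 hb2sum.summable, tsum_mul_left,
        tsum_geometric_of_lt_one (by norm_num) (by norm_num), hb2sum.tsum_eq]
      have h2 : (1 - (1/2:ℝ))⁻¹ = 2 := by norm_num
      rw [h2]; ring
    calc (∑' j : ℕ, (2 * ((j:ℝ)+1)^2 * x - 1) * Real.exp (-(((j:ℝ)+1)^2 * x)))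
        ≤ ∑' j : ℕ, b j := Summable.tsum_le_tsum hble hfs hbsum
      _ = 2 * x * Real.exp (-x) := htsumb
  · rw [hrhs]
    exact part2_stmt4 x hx
end

section
/- Let T > 0 and let p_T(m) = (1/(√(2π)·T·Z))·exp(-m²/(2T²)) for m ∈ ℤ, where Z is chosen so that Σ_{m∈ℤ} p_T(m) = 1. Then for every k ∈ ℝ, Σ_{m∈ℤ} p_T(m)·cos(km) = (1/Z')·Σ_{j∈ℤ} exp(-(k+2jπ)²T²/2), where Z' = Σ_{j∈ℤ} exp(-(2jπ)²T²/2). That is, the discrete-time cosine transform of the discrete Gaussian is the periodic Gaussian. -/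
/-! Poisson summation for the Gaussian `exp (-n² / (2σ²))` modulated by `exp (i k n)`
(`Complex.tsum_exp_neg_quadratic`) turns it into the periodic Gaussian in `k`; taking real parts
gives the cosine transform, and its value at `k = 0` identifies `Z` with the denominator `Z'`. -/

open Real

open Complex in
lemma summable_cexp_neg_mul_sq_add_mul_I {a : ℂ} (ha : 0 < a.re) (k : ℂ) :
    Summable fun n : ℤ ↦ cexp (-a * n ^ 2 + k * n * I) := by
  have hτ : 0 < (I * a / π).im := by simpa using div_pos ha pi_pos
  refine ((summable_jacobiTheta₂_term_iff (k / (2 * π)) _).mpr hτ).congr fun n ↦ ?_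
  have hπ : (π : ℂ) ≠ 0 := ofReal_ne_zero.mpr pi_ne_zero
  rw [jacobiTheta₂_term]
  congr 1
  field_simp
  linear_combination (n : ℂ) ^ 2 * a * I_sq

open Complex in
lemma tsum_exp_neg_sq_div_mul_cos {σ : ℝ} (hσ : 0 < σ) (k : ℝ) :
    ∑' n : ℤ, rexp (-(n : ℝ) ^ 2 / (2 * σ ^ 2)) * Real.cos (k * n)
      = √(2 * π) * σ * ∑' j : ℤ, rexp (-(k + 2 * j * π) ^ 2 * σ ^ 2 / 2) := by
  have hπ : (π : ℂ) ≠ 0 := ofReal_ne_zero.mpr pi_ne_zero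
  have hσ' : (σ : ℂ) ≠ 0 := ofReal_ne_zero.mpr hσ.ne'
  have hc : (0 : ℝ) < 1 / (2 * π * σ ^ 2) := by positivity
  have hpoisson := tsum_exp_neg_quadratic (a := ((1 / (2 * π * σ ^ 2) : ℝ) : ℂ))
    (by rwa [ofReal_re]) (k * I / (2 * π))
  have hlhs (n : ℤ) : -π * ((1 / (2 * π * σ ^ 2) : ℝ) : ℂ) * n ^ 2 + 2 * π * (k * I / (2 * π)) * n
      = ((-(n : ℝ) ^ 2 / (2 * σ ^ 2) : ℝ) : ℂ) + ((k * n : ℝ) : ℂ) * I := by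
    push_cast; field_simp
  have hrhs (n : ℤ) : -π / ((1 / (2 * π * σ ^ 2) : ℝ) : ℂ) * (n + I * (k * I / (2 * π))) ^ 2
      = ((-(k + 2 * (-n : ℤ) * π) ^ 2 * σ ^ 2 / 2 : ℝ) : ℂ) := by
    push_cast; field_simp; rw [I_sq]; ring
  have hfactor : 1 / ((1 / (2 * π * σ ^ 2) : ℝ) : ℂ) ^ (1 / 2 : ℂ) = ((√(2 * π) * σ : ℝ) : ℂ) := by
    have hsqrt : √(1 / (2 * π * σ ^ 2)) = (√(2 * π) * σ)⁻¹ := by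
      rw [one_div, Real.sqrt_inv, Real.sqrt_mul (by positivity), Real.sqrt_sq hσ.le]
    rw [show (1 / 2 : ℂ) = ((1 / 2 : ℝ) : ℂ) by norm_num, ← ofReal_cpow hc.le,
      ← Real.sqrt_eq_rpow, hsqrt, ofReal_inv, one_div, inv_inv]
  have hsummable : Summable fun n : ℤ ↦
      cexp (((-(n : ℝ) ^ 2 / (2 * σ ^ 2) : ℝ) : ℂ) + ((k * n : ℝ) : ℂ) * I) :=
    (summable_cexp_neg_mul_sq_add_mul_I (a := ((1 / (2 * σ ^ 2) : ℝ) : ℂ))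
      (by rw [ofReal_re]; positivity) k).congr fun n ↦ by push_cast; ring_nf
  simp only [hlhs, hrhs, hfactor, ← ofReal_exp, ← ofReal_tsum, ← ofReal_mul] at hpoisson
  calc ∑' n : ℤ, rexp (-(n : ℝ) ^ 2 / (2 * σ ^ 2)) * Real.cos (k * n)
      = ∑' n : ℤ, (cexp (((-(n : ℝ) ^ 2 / (2 * σ ^ 2) : ℝ) : ℂ) + ((k * n : ℝ) : ℂ) * I)).re := by
        simp only [Complex.exp_add, ← ofReal_exp, re_ofReal_mul, exp_ofReal_mul_I_re]
    _ = _ := by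
        rw [← re_tsum hsummable, hpoisson, ofReal_re]
        exact congrArg _ ((Equiv.neg ℤ).tsum_eq fun j : ℤ ↦ rexp (-(k + 2 * j * π) ^ 2 * σ ^ 2 / 2))

theorem stmt_7 (T : ℝ) (hT : 0 < T)
    (Z : ℝ)
    (hZ : Z = ∑' m : ℤ, (1 / (Real.sqrt (2 * π) * T)) * Real.exp (-(m : ℝ) ^ 2 / (2 * T ^ 2))) :
    ∀ k : ℝ,
      (∑' m : ℤ, ((1 / (Real.sqrt (2 * π) * T * Z)) *
          Real.exp (-(m : ℝ) ^ 2 / (2 * T ^ 2))) * Real.cos (k * m))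
        = (∑' j : ℤ, Real.exp (-(k + 2 * j * π) ^ 2 * T ^ 2 / 2)) /
          (∑' j : ℤ, Real.exp (-(2 * j * π) ^ 2 * T ^ 2 / 2)) := by
  intro k
  have hsT : √(2 * π) * T ≠ 0 := by positivity
  have hZ' : Z = ∑' j : ℤ, rexp (-(2 * j * π) ^ 2 * T ^ 2 / 2) := by
    have hk0 := tsum_exp_neg_sq_div_mul_cos hT 0
    simp only [zero_mul, Real.cos_zero, mul_one, zero_add] at hk0
    rw [hZ, tsum_mul_left, hk0, one_div_mul_eq_div, mul_div_cancel_left₀ _ hsT]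
  calc ∑' m : ℤ, 1 / (√(2 * π) * T * Z) * rexp (-(m : ℝ) ^ 2 / (2 * T ^ 2)) * Real.cos (k * m)
      = 1 / (√(2 * π) * T * Z) *
          ∑' m : ℤ, rexp (-(m : ℝ) ^ 2 / (2 * T ^ 2)) * Real.cos (k * m) := by
        simp only [mul_assoc, tsum_mul_left]
    _ = _ := by
        rw [tsum_exp_neg_sq_div_mul_cos hT k, one_div_mul_eq_div, mul_div_mul_left _ _ hsT, hZ']
end
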